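/- For the abelian Lie algebra V = ℝ^n with prolongation spaces g_k = Ker(q : S^{k+1}V* ⊗ V → S^k V*) where q is the contraction, the bracket of g_{-1} = V with g_{k+1}' maps onto g_k', i.e. [g_{-1}, g_{k+1}'] = g_k' for all k ≥ 0; in particular [g_{-1}, g_1'] = sl(V) ⊂ g_0. -/

import Mathlib

/-!
Let `ξ` be a divergence-free field, homogeneous of degree `d`, in `n` variables, and `N = n + d`.
By Euler's identity both `N x_j ξ` and `ξ_j E`, with `E = ∑ x_i ∂_i` the Euler field, have
divergence `N ξ_j`; so their difference `Ξ_j` is divergence free of degree `d + 1`, and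
`∑ j, ∂_j Ξ_j = (N² - 1) ξ`. For `d ≥ 1` and `n ≥ 1` we have `N ≥ 2`, so `ξ` is a combination of
brackets `[∂_j, Ξ_j]`. Conversely, constant-coefficient derivations commute with the divergence.
Linear fields are matrices, and their divergence is the trace.
-/

open MvPolynomial

namespace MvPolynomial

variable {σ R K : Type*}

theorem pderiv_pderiv_comm [CommRing R] (i j : σ) (p : MvPolynomial σ R) :
    pderiv i (pderiv j p) = pderiv j (pderiv i p) := by
  classical
  have hcomm : ⁅pderiv i, pderiv j⁆ = (0 : Derivation R (MvPolynomial σ R) (MvPolynomial σ R)) :=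
    derivation_ext fun s => by
      rw [Derivation.commutator_apply]
      simp [pderiv_X, Pi.single_apply, apply_ite]
  have hp := congr($hcomm p)
  rwa [Derivation.commutator_apply, Derivation.zero_apply, sub_eq_zero] at hp

theorem pderiv_sum_smul_X [CommSemiring R] [Fintype σ] (a : σ → R) (i : σ) :
    pderiv i (∑ j, a j • X j : MvPolynomial σ R) = C (a i) := by
  classical
  simp [map_sum, pderiv_X, Pi.single_apply, smul_eq_C_mul]

theorem IsHomogeneous.exists_eq_sum_smul_X [CommSemiring R] [Fintype σ] {p : MvPolynomial σ R}
    (hp : p.IsHomogeneous 1) : ∃ a : σ → R, p = ∑ j, a j • X j := by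
  refine ⟨fun j => coeff 0 (pderiv j p), ?_⟩
  calc p = ∑ j, X j * pderiv j p := by rw [hp.sum_X_mul_pderiv, one_smul]
    _ = ∑ j, coeff 0 (pderiv j p) • X j := by
      refine Finset.sum_congr rfl fun j _ => ?_
      have hconst : pderiv j p = C (coeff 0 (pderiv j p)) :=
        totalDegree_eq_zero_iff_eq_C.mp ((totalDegree_zero_iff_isHomogeneous σ).mpr hp.pderiv)
      rw [smul_eq_C_mul, ← hconst, mul_comm]

noncomputable def divergence [CommSemiring R] [Fintype σ] (ξ : σ → MvPolynomial σ R) :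
    MvPolynomial σ R :=
  ∑ i, pderiv i (ξ i)

section divergence

variable [Fintype σ]

theorem divergence_sum_smul_X [CommSemiring R] (A : Matrix σ σ R) :
    divergence (fun i => ∑ j, A i j • X j) = C A.trace := by
  simp only [divergence, pderiv_sum_smul_X, ← map_sum, Matrix.trace, Matrix.diag]

theorem divergence_X_mul [CommSemiring R] (j : σ) (ξ : σ → MvPolynomial σ R) :
    divergence (fun i => X j * ξ i) = ξ j + X j * divergence ξ := by
  classical
  simp [divergence, Finset.sum_add_distrib, Finset.mul_sum, pderiv_X, Pi.single_apply, add_comm]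

theorem divergence_mul_X [CommSemiring R] {p : MvPolynomial σ R} {d : ℕ} (hp : p.IsHomogeneous d) :
    divergence (fun i => X i * p) = (Fintype.card σ + d) • p := by
  simp [divergence, Finset.sum_add_distrib, hp.sum_X_mul_pderiv, add_smul, add_comm]

theorem divergence_sum_smul_pderiv [CommRing R] (v : σ → R) (ξ : σ → MvPolynomial σ R) :
    divergence (fun i => ∑ j, v j • pderiv j (ξ i)) = ∑ j, v j • pderiv j (divergence ξ) := by
  simp only [divergence, map_sum, Derivation.map_smul, Finset.smul_sum]
  rw [Finset.sum_comm]
  exact Fintype.sum_congr _ _ fun j => Fintype.sum_congr _ _ fun i => by rw [pderiv_pderiv_comm]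

theorem isHomogeneous_one_and_divergence_eq_zero_iff [CommSemiring R]
    (ξ : σ → MvPolynomial σ R) :
    ((∀ i, (ξ i).IsHomogeneous 1) ∧ divergence ξ = 0) ↔
      ∃ A : Matrix σ σ R, A.trace = 0 ∧ ξ = fun i => ∑ j, A i j • X j := by
  constructor
  · rintro ⟨hhom, hdiv⟩
    choose A hA using fun i => (hhom i).exists_eq_sum_smul_X
    have hξ : ξ = fun i => ∑ j, A i j • X j := _root_.funext hA
    refine ⟨A, ?_, hξ⟩
    rwa [hξ, divergence_sum_smul_X A, C_eq_zero] at hdiv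
  · rintro ⟨A, htr, rfl⟩
    refine ⟨fun i => IsHomogeneous.sum _ _ _ fun j _ => ?_, ?_⟩
    · rw [smul_eq_C_mul]; exact isHomogeneous_C_mul_X _ _
    · rw [divergence_sum_smul_X, htr, map_zero]

end divergence

section prolong

variable [Fintype σ] [CommRing R]

theorem divergence_sub (ξ ζ : σ → MvPolynomial σ R) :
    divergence (ξ - ζ) = divergence ξ - divergence ζ := by
  simp [divergence, Finset.sum_sub_distrib]

theorem divergence_nsmul (m : ℕ) (ξ : σ → MvPolynomial σ R) :
    divergence (m • ξ) = m • divergence ξ := by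
  simp [divergence, Finset.smul_sum]

noncomputable def prolong (d : ℕ) (ξ : σ → MvPolynomial σ R) (j : σ) : σ → MvPolynomial σ R :=
  (Fintype.card σ + d) • (fun i => X j * ξ i) - fun i => X i * ξ j

variable {d : ℕ} {ξ : σ → MvPolynomial σ R}

theorem prolong_apply (j i : σ) :
    prolong d ξ j i = (Fintype.card σ + d) • (X j * ξ i) - X i * ξ j := by
  simp [prolong]

theorem isHomogeneous_prolong (hhom : ∀ i, (ξ i).IsHomogeneous d) (j i : σ) :
    (prolong d ξ j i).IsHomogeneous (d + 1) := by
  have hXξ : ∀ a b : σ, X a * ξ b ∈ homogeneousSubmodule σ R (d + 1) := fun a b => by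
    simpa [add_comm] using (isHomogeneous_X R a).mul (hhom b)
  rw [prolong_apply]
  exact Submodule.sub_mem _ (Submodule.smul_of_tower_mem _ _ (hXξ j i)) (hXξ i j)

theorem divergence_prolong (hhom : ∀ i, (ξ i).IsHomogeneous d) (hdiv : divergence ξ = 0)
    (j : σ) : divergence (prolong d ξ j) = 0 := by
  rw [prolong, divergence_sub, divergence_nsmul, divergence_X_mul, divergence_mul_X (hhom j), hdiv,
    mul_zero, add_zero, sub_self]

theorem sum_pderiv_prolong (hhom : ∀ i, (ξ i).IsHomogeneous d) (hdiv : divergence ξ = 0)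
    (i : σ) :
    ∑ j, pderiv j (prolong d ξ j i) = (((Fintype.card σ + d : ℕ) : ℤ) ^ 2 - 1) • ξ i := by
  have hfield : (fun j => prolong d ξ j i) =
      (Fintype.card σ + d) • (fun j => X j * ξ i) - fun j => X i * ξ j := by
    funext j
    simp [prolong_apply]
  change divergence (fun j => prolong d ξ j i) = _
  rw [hfield, divergence_sub, divergence_nsmul, divergence_mul_X (hhom i), divergence_X_mul, hdiv,
    mul_zero, add_zero, smul_smul, sub_smul, one_smul, sq, ← Nat.cast_mul, natCast_zsmul]

end prolong

section span

variable [Fintype σ] [Field K] [CharZero K]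

theorem mem_span_sum_smul_pderiv_of_divergence_eq_zero {k : ℕ} {ξ : σ → MvPolynomial σ K}
    (hhom : ∀ i, (ξ i).IsHomogeneous (k + 1)) (hdiv : divergence ξ = 0) :
    ξ ∈ Submodule.span K {η | ∃ (v : σ → K) (Ξ : σ → MvPolynomial σ K),
      (∀ i, (Ξ i).IsHomogeneous (k + 2)) ∧ divergence Ξ = 0 ∧
        η = fun i => ∑ j, v j • pderiv j (Ξ i)} := by
  classical
  cases isEmpty_or_nonempty σ
  · rw [Subsingleton.elim ξ 0]
    exact Submodule.zero_mem _
  set N : ℕ := Fintype.card σ + (k + 1)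
  have hN : ((N : ℤ) ^ 2 - 1 : ℤ) ≠ 0 := by
    have : 2 ≤ N := by have := Fintype.card_pos (α := σ); omega
    intro h
    nlinarith
  have hξ : ξ = (((N : ℤ) ^ 2 - 1 : ℤ) : K)⁻¹ •
      ∑ j, fun i => ∑ l, (Pi.single j 1 : σ → K) l • pderiv l (prolong (k + 1) ξ j i) := by
    funext i
    simp only [Pi.smul_apply, Finset.sum_apply, Pi.single_apply, ite_smul, one_smul, zero_smul,
      Finset.sum_ite_eq', Finset.mem_univ, if_true]
    rw [sum_pderiv_prolong hhom hdiv, ← Int.cast_smul_eq_zsmul K, smul_smul,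
      inv_mul_cancel₀ (Int.cast_ne_zero.mpr hN), one_smul]
  rw [hξ]
  refine Submodule.smul_mem _ _ (Submodule.sum_mem _ fun j _ => Submodule.subset_span ?_)
  exact ⟨Pi.single j 1, prolong (k + 1) ξ j, isHomogeneous_prolong hhom j,
    divergence_prolong hhom hdiv j, rfl⟩

theorem span_sum_smul_pderiv_eq (k : ℕ) :
    Submodule.span K {η | ∃ (v : σ → K) (Ξ : σ → MvPolynomial σ K),
      (∀ i, (Ξ i).IsHomogeneous (k + 2)) ∧ divergence Ξ = 0 ∧
        η = fun i => ∑ j, v j • pderiv j (Ξ i)} =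
      Submodule.span K {ξ | (∀ i, (ξ i).IsHomogeneous (k + 1)) ∧ divergence ξ = 0} := by
  refine le_antisymm (Submodule.span_le.mpr ?_) (Submodule.span_le.mpr ?_)
  · rintro _ ⟨v, Ξ, hhom, hdiv, rfl⟩
    refine Submodule.subset_span ⟨fun i => IsHomogeneous.sum _ _ _ fun j _ => ?_, ?_⟩
    · rw [smul_eq_C_mul]
      exact (hhom i).pderiv.C_mul _
    · simp [divergence_sum_smul_pderiv, hdiv]
  · rintro ξ ⟨hhom, hdiv⟩
    exact mem_span_sum_smul_pderiv_of_divergence_eq_zero hhom hdiv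

end span

end MvPolynomial

theorem bracket_with_gminus1_surjective_on_divergence_free_general
    (n : ℕ) (k : ℕ) :
    (Submodule.span ℝ
        {η : Fin n → MvPolynomial (Fin n) ℝ |
          ∃ (v : Fin n → ℝ) (ξ : Fin n → MvPolynomial (Fin n) ℝ),
            (∀ i, (ξ i).IsHomogeneous (k + 2)) ∧
            (∑ i, pderiv i (ξ i)) = 0 ∧
            η = fun i => ∑ j, v j • pderiv j (ξ i)}
      = Submodule.span ℝ
        {ξ : Fin n → MvPolynomial (Fin n) ℝ |
          (∀ i, (ξ i).IsHomogeneous (k + 1)) ∧ (∑ i, pderiv i (ξ i)) = 0})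
    ∧ (Submodule.span ℝ
        {η : Fin n → MvPolynomial (Fin n) ℝ |
          ∃ (v : Fin n → ℝ) (ξ : Fin n → MvPolynomial (Fin n) ℝ),
            (∀ i, (ξ i).IsHomogeneous 2) ∧
            (∑ i, pderiv i (ξ i)) = 0 ∧
            η = fun i => ∑ j, v j • pderiv j (ξ i)}
      = Submodule.span ℝ
        {ξ : Fin n → MvPolynomial (Fin n) ℝ |
          ∃ A : Matrix (Fin n) (Fin n) ℝ,
            Matrix.trace A = 0 ∧ ξ = fun i => ∑ j, A i j • X j}) := by
  refine ⟨span_sum_smul_pderiv_eq k, (span_sum_smul_pderiv_eq 0).trans ?_⟩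
  congr 1
  ext ξ
  exact isHomogeneous_one_and_divergence_eq_zero_iff ξ

/-- For `V = ℝ^n` (`n ≥ 2`) with prolongation spaces
`g_k' = Ker(q : S^{k+1}V* ⊗ V → S^k V*)` (homogeneous degree-`(k+1)` polynomial
vector fields with vanishing divergence), the bracket of `g_{-1} = V` (constant
vector fields, acting by directional derivative) with `g_{k+1}'` spans exactly
`g_k'` for all `k ≥ 0`; in particular `[g_{-1}, g_1'] = sl(V) ⊂ g_0` (traceless
linear vector fields). -/
theorem bracket_with_gminus1_surjective_on_divergence_free
    (n : ℕ) (hn : 2 ≤ n) (k : ℕ) :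
    (Submodule.span ℝ
        {η : Fin n → MvPolynomial (Fin n) ℝ |
          ∃ (v : Fin n → ℝ) (ξ : Fin n → MvPolynomial (Fin n) ℝ),
            (∀ i, (ξ i).IsHomogeneous (k + 2)) ∧
            (∑ i, pderiv i (ξ i)) = 0 ∧
            η = fun i => ∑ j, v j • pderiv j (ξ i)}
      = Submodule.span ℝ
        {ξ : Fin n → MvPolynomial (Fin n) ℝ |
          (∀ i, (ξ i).IsHomogeneous (k + 1)) ∧ (∑ i, pderiv i (ξ i)) = 0})
    ∧ (Submodule.span ℝ
        {η : Fin n → MvPolynomial (Fin n) ℝ |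
          ∃ (v : Fin n → ℝ) (ξ : Fin n → MvPolynomial (Fin n) ℝ),
            (∀ i, (ξ i).IsHomogeneous 2) ∧
            (∑ i, pderiv i (ξ i)) = 0 ∧
            η = fun i => ∑ j, v j • pderiv j (ξ i)}
      = Submodule.span ℝ
        {ξ : Fin n → MvPolynomial (Fin n) ℝ |
          ∃ A : Matrix (Fin n) (Fin n) ℝ,
            Matrix.trace A = 0 ∧ ξ = fun i => ∑ j, A i j • X j}) :=
  bracket_with_gminus1_surjective_on_divergence_free_general n k
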